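/- For the witness operator W_N = (1/2)I − |G_N⟩⟨G_N| with |G_N⟩ = (|0…0⟩ + |1…1⟩)/√2, every product state σ = σ_A ⊗ σ_B satisfies Tr(W_N σ) ≥ 0. -/

import Mathlib

open Matrix Kronecker BigOperators
open scoped ComplexOrder

noncomputable section

/-- A density matrix: positive semidefinite with unit trace. -/
def IsDensity {n : Type*} [Fintype n] (ρ : Matrix n n ℂ) : Prop :=
  ρ.PosSemidef ∧ ρ.trace = 1

/-- A measurement operator `M` with `0 ≤ M ≤ I`. -/
def IsMeas {n : Type*} [Fintype n] [DecidableEq n] (M : Matrix n n ℂ) : Prop :=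
  M.PosSemidef ∧ ((1 : Matrix n n ℂ) - M).PosSemidef

/-- Trace norm of a Hermitian matrix: sum of absolute values of its eigenvalues. -/
def trNorm {n : Type*} [Fintype n] [DecidableEq n] (A : Matrix n n ℂ) : ℝ :=
  if h : A.IsHermitian then ∑ i, |h.eigenvalues i| else 0

/-- Separable states: the convex hull of product density matrices. -/
def SepSet (α β : Type*) [Fintype α] [Fintype β] :
    Set (Matrix (α × β) (α × β) ℂ) :=
  convexHull ℝ {τ | ∃ ρA ρB, IsDensity ρA ∧ IsDensity ρB ∧ τ = ρA ⊗ₖ ρB}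

/-- The loss `L(ρ,σ,M) = (Tr(Mρ) + Tr((I−M)σ))/2`. -/
def lossL {n : Type*} [Fintype n] [DecidableEq n] (ρ σ M : Matrix n n ℂ) : ℂ :=
  ((M * ρ).trace + (((1 : Matrix n n ℂ) - M) * σ).trace) / 2

/-- The discriminator value `max_{0 ≤ M ≤ I} L(ρ,σ,M)` (real part). -/
def maxLoss {n : Type*} [Fintype n] [DecidableEq n] (ρ σ : Matrix n n ℂ) : ℝ :=
  sSup {x : ℝ | ∃ M, IsMeas M ∧ x = (lossL ρ σ M).re}

/-- The GHZ state `(|0…0⟩ + |1…1⟩)/√2` across the bipartition `α | β` of the qubits. -/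
def ghz (α β : Type*) [Fintype α] [Fintype β] [DecidableEq α] [DecidableEq β] :
    ((α → Fin 2) × (β → Fin 2)) → ℂ :=
  fun fg =>
    if fg.1 = (fun _ => 0) ∧ fg.2 = (fun _ => 0) then ((Real.sqrt 2 : ℝ) : ℂ)⁻¹
    else if fg.1 = (fun _ => 1) ∧ fg.2 = (fun _ => 1) then ((Real.sqrt 2 : ℝ) : ℂ)⁻¹
    else 0

/-!
Write `A` and `B` for the compressions of `σ_A` and `σ_B` to the two-dimensional span of
`|0…0⟩` and `|1…1⟩`. Then `⟨G_N|σ_A ⊗ σ_B|G_N⟩ = Tr(A Bᵀ) / 2`, and for positive semidefinite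
`2 × 2` matrices `Re Tr(A B) ≤ Tr A · Tr B`: the diagonal terms are part of the product of traces,
and the off-diagonal ones are controlled by `|a₀₁|² ≤ a₀₀ a₁₁` (nonnegativity of `det A`) and
AM-GM. Compressions do not increase the trace, so the overlap is at most `1/2`.
-/

namespace Matrix.PosSemidef

variable {n : Type*} {A : Matrix n n ℂ}

lemma normSq_apply_le (hA : A.PosSemidef) (i j : n) :
    Complex.normSq (A i j) ≤ (A i i).re * (A j j).re := by
  have hdet := (hA.submatrix ![i, j]).det_nonneg
  rw [det_fin_two] at hdet
  simp only [submatrix_apply, Matrix.cons_val_zero, Matrix.cons_val_one] at hdet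
  have hji : A j i = starRingEnd ℂ (A i j) := by simpa using (hA.isHermitian.apply j i).symm
  have hii := Complex.nonneg_iff.mp (hA.diag_nonneg (i := i))
  have hjj := Complex.nonneg_iff.mp (hA.diag_nonneg (i := j))
  rw [hji, Complex.mul_conj, Complex.nonneg_iff] at hdet
  simp only [Complex.sub_re, Complex.mul_re, Complex.ofReal_re, ← hii.2, ← hjj.2] at hdet
  linarith [hdet.1]

lemma trace_submatrix_le [Fintype n] {m : Type*} [Fintype m] (hA : A.PosSemidef) {e : m → n}
    (he : Function.Injective e) : (A.submatrix e e).trace ≤ A.trace :=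
  (Finset.sum_map Finset.univ ⟨e, he⟩ fun i => A i i).symm.trans_le
    (Finset.sum_le_univ_sum_of_nonneg fun _ => hA.diag_nonneg)

lemma re_trace_mul_le_fin_two {A B : Matrix (Fin 2) (Fin 2) ℂ} (hA : A.PosSemidef)
    (hB : B.PosSemidef) : (A * B).trace.re ≤ A.trace.re * B.trace.re := by
  have hA10 : A 1 0 = starRingEnd ℂ (A 0 1) := by simpa using (hA.isHermitian.apply 1 0).symm
  have hB10 : B 1 0 = starRingEnd ℂ (B 0 1) := by simpa using (hB.isHermitian.apply 1 0).symm
  have hA0 := Complex.nonneg_iff.mp (hA.diag_nonneg (i := 0))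
  have hA1 := Complex.nonneg_iff.mp (hA.diag_nonneg (i := 1))
  have hB0 := Complex.nonneg_iff.mp (hB.diag_nonneg (i := 0))
  have hB1 := Complex.nonneg_iff.mp (hB.diag_nonneg (i := 1))
  -- the off-diagonal contribution is `2 Re (a₀₁ b₁₀) ≤ 2 |a₀₁| |b₀₁| ≤ a₀₀ b₁₁ + a₁₁ b₀₀`
  have hcross : (A 0 1 * B 1 0).re ≤ ‖A 0 1‖ * ‖B 0 1‖ := by
    simpa only [norm_mul, hB10, Complex.norm_conj] using Complex.re_le_norm (A 0 1 * B 1 0)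
  have hnormA : ‖A 0 1‖ ^ 2 ≤ (A 0 0).re * (A 1 1).re := by
    simpa [Complex.sq_norm] using hA.normSq_apply_le 0 1
  have hnormB : ‖B 0 1‖ ^ 2 ≤ (B 0 0).re * (B 1 1).re := by
    simpa [Complex.sq_norm] using hB.normSq_apply_le 0 1
  have hamgm : 2 * (‖A 0 1‖ * ‖B 0 1‖) ≤ (A 0 0).re * (B 1 1).re + (A 1 1).re * (B 0 0).re := by
    nlinarith [mul_le_mul hnormA hnormB (sq_nonneg _) (mul_nonneg hA0.1 hA1.1),
      sq_nonneg ((A 0 0).re * (B 1 1).re - (A 1 1).re * (B 0 0).re),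
      mul_nonneg (norm_nonneg (A 0 1)) (norm_nonneg (B 0 1)),
      mul_nonneg hA0.1 hB1.1, mul_nonneg hA1.1 hB0.1]
  have hconj : (A 1 0 * B 0 1).re = (A 0 1 * B 1 0).re := by
    rw [hA10, hB10, ← Complex.conj_re, map_mul, Complex.conj_conj]
  simp only [trace_fin_two, mul_apply, Fin.sum_univ_two, Complex.add_re] at hconj ⊢
  simp only [Complex.mul_re, ← hA0.2, ← hA1.2, ← hB0.2, ← hB1.2] at hconj hcross ⊢
  linarith

end Matrix.PosSemidef

section GHZ

open Function

variable {α β : Type*} [Fintype α] [Fintype β] [DecidableEq α] [DecidableEq β] [Nonempty α]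

lemma ghz_eq_single_add_single :
    ghz α β = Pi.single (const α 0, const β 0) ((Real.sqrt 2 : ℝ) : ℂ)⁻¹
      + Pi.single (const α 1, const β 1) ((Real.sqrt 2 : ℝ) : ℂ)⁻¹ := by
  have h01 : (const α 0, const β 0) ≠ (const α (1 : Fin 2), const β (1 : Fin 2)) :=
    fun h => const_injective.ne (by decide) (congrArg Prod.fst h)
  ext x
  rw [Pi.add_apply, Pi.single_apply, Pi.single_apply]
  by_cases h0 : x = (const α 0, const β 0)
  · subst h0
    rw [if_pos rfl, if_neg h01, add_zero]
    exact if_pos ⟨rfl, rfl⟩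
  by_cases h1 : x = (const α 1, const β 1)
  · subst h1
    rw [if_neg h01.symm, if_pos rfl, zero_add]
    exact (if_neg fun h => h01.symm (Prod.ext h.1 h.2)).trans (if_pos ⟨rfl, rfl⟩)
  rw [if_neg h0, if_neg h1, add_zero]
  exact (if_neg fun h => h0 (Prod.ext h.1 h.2)).trans (if_neg fun h => h1 (Prod.ext h.1 h.2))

lemma trace_vecMulVec_ghz_mul_kronecker (A : Matrix (α → Fin 2) (α → Fin 2) ℂ)
    (B : Matrix (β → Fin 2) (β → Fin 2) ℂ) :
    (vecMulVec (ghz α β) (star (ghz α β)) * (A ⊗ₖ B)).trace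
      = (A.submatrix (const α) (const α) * (B.submatrix (const β) (const β))ᵀ).trace / 2 := by
  have hc : star ((Real.sqrt 2 : ℝ) : ℂ)⁻¹ * ((Real.sqrt 2 : ℝ) : ℂ)⁻¹ = 2⁻¹ := by
    rw [star_inv₀, Complex.star_def, Complex.conj_ofReal, ← mul_inv, ← Complex.ofReal_mul,
      Real.mul_self_sqrt zero_le_two, Complex.ofReal_ofNat]
  rw [vecMulVec_mul, trace_vecMulVec, ghz_eq_single_add_single]
  simp only [star_add, ← Pi.single_star, add_vecMul, single_vecMul, add_dotProduct,
    single_dotProduct, Pi.add_apply, Pi.smul_apply, row_apply, kroneckerMap_apply, trace_fin_two,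
    mul_apply, Fin.sum_univ_two, submatrix_apply, transpose_apply, smul_eq_mul]
  rw [div_eq_inv_mul, ← hc]
  ring

end GHZ

/-- The GHZ witness `W_N = (1/2)I − |G_N⟩⟨G_N|` is nonnegative on all product
states `σ_A ⊗ σ_B` for any bipartition with both parts nonempty. -/
theorem ghz_witness_nonneg_on_products
    {α β : Type*} [Fintype α] [Fintype β] [DecidableEq α] [DecidableEq β]
    [Nonempty α] [Nonempty β]
    (σA : Matrix (α → Fin 2) (α → Fin 2) ℂ) (σB : Matrix (β → Fin 2) (β → Fin 2) ℂ)
    (hA : IsDensity σA) (hB : IsDensity σB) :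
    0 ≤ ((((1 / 2 : ℂ) • (1 : Matrix ((α → Fin 2) × (β → Fin 2)) ((α → Fin 2) × (β → Fin 2)) ℂ)
        - vecMulVec (ghz α β) (star (ghz α β))) * (σA ⊗ₖ σB)).trace).re := by
  obtain ⟨hA, htrA⟩ := hA
  obtain ⟨hB, htrB⟩ := hB
  set A := σA.submatrix (Function.const α) (Function.const α)
  set B := (σB.submatrix (Function.const β) (Function.const β))ᵀ
  have hA' : A.PosSemidef := hA.submatrix _
  have hB' : B.PosSemidef := (hB.submatrix _).transpose
  have htrA' : A.trace ≤ 1 := htrA ▸ hA.trace_submatrix_le Function.const_injective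
  have htrB' : B.trace ≤ 1 :=
    (trace_transpose _).trans_le (htrB ▸ hB.trace_submatrix_le Function.const_injective)
  have hB'0 := Complex.nonneg_iff.mp hB'.trace_nonneg
  have hexp : (A * B).trace.re ≤ 1 := calc
    _ ≤ A.trace.re * B.trace.re := hA'.re_trace_mul_le_fin_two hB'
    _ ≤ 1 := mul_le_one₀ (Complex.le_def.mp htrA').1 hB'0.1 (Complex.le_def.mp htrB').1
  rw [sub_mul, smul_mul, Matrix.one_mul, trace_sub, trace_smul, trace_kronecker, htrA, htrB,
    trace_vecMulVec_ghz_mul_kronecker]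
  simp only [smul_eq_mul, mul_one, Complex.sub_re, Complex.div_ofNat_re, Complex.one_re]
  linarith
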